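/- arXiv:2111.05008 — 4 statements merged into one kernel-verified Lean document; each statement's English description precedes it below -/
import Mathlib

section
/- Let V be a real inner product space, t ≥ 1 a natural number, φ₁, …, φ_t ∈ V, v ∈ V, λ > 0, ε ≥ 0, and m ∈ ℝ^t a vector with |mᵢ| ≤ ε for every i. With K ∈ ℝ^{t×t} the Gram matrix K_{ij} = ⟪φᵢ, φⱼ⟫, k ∈ ℝ^t the vector kᵢ = ⟪φᵢ, v⟫, and σ² := ⟪v, v⟫ − kᵀ(K + λI)⁻¹k, it holds that |kᵀ(K + λI)⁻¹ m| ≤ (ε·√t/√λ)·√σ². -/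
/-!
Put `w = (K + λI)⁻¹ k`, so that `kᵀ(K + λI)⁻¹ m = w ⬝ᵥ m` by symmetry of `K + λI`. For the
feature-space point `s = ∑ wᵢ φᵢ` one has `⟪s, s⟫ = wᵀ K w = w ⬝ᵥ k - λ ‖w‖²` and `⟪v, s⟫ = w ⬝ᵥ k`,
hence `0 ≤ ‖v - s‖² = σ² - λ ‖w‖²`. Cauchy–Schwarz then gives
`|w ⬝ᵥ m| ≤ ‖w‖ ‖m‖ ≤ √(σ² / λ) · √t ε`.
-/

open Matrix InnerProductSpace

section GramRegularization

variable {ι V : Type*} [Fintype ι] [DecidableEq ι] [NormedAddCommGroup V] [InnerProductSpace ℝ V]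

theorem mul_dotProduct_self_le_of_gram_add_smul_one_mulVec_eq (φ : ι → V) (v : V) (lam : ℝ)
    {w : ι → ℝ} (hw : (gram ℝ φ + lam • 1) *ᵥ w = fun i => ⟪φ i, v⟫_ℝ) :
    lam * (w ⬝ᵥ w) ≤ ⟪v, v⟫_ℝ - (fun i => ⟪φ i, v⟫_ℝ) ⬝ᵥ w := by
  set k : ι → ℝ := fun i => ⟪φ i, v⟫_ℝ
  set s : V := ∑ i, w i • φ i
  have hgram : gram ℝ φ *ᵥ w = k - lam • w := by
    rw [← hw, add_mulVec, smul_mulVec, one_mulVec, add_sub_cancel_right]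
  have hss : ⟪s, s⟫_ℝ = k ⬝ᵥ w - lam * (w ⬝ᵥ w) := by
    rw [← star_trivial w, ← star_dotProduct_gram_mulVec, star_trivial, hgram, dotProduct_sub,
      dotProduct_smul, dotProduct_comm, smul_eq_mul]
  have hvs : ⟪v, s⟫_ℝ = k ⬝ᵥ w := by
    simp only [s, k, inner_sum, real_inner_smul_right, dotProduct, real_inner_comm, mul_comm]
  have hresidual := real_inner_self_nonneg (x := v - s)
  rw [real_inner_sub_sub_self, hvs, hss] at hresidual
  linarith

end GramRegularization

section DotProduct

variable {ι : Type*} [Fintype ι]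

theorem abs_dotProduct_le_sqrt_mul_sqrt (x y : ι → ℝ) :
    |x ⬝ᵥ y| ≤ √(x ⬝ᵥ x) * √(y ⬝ᵥ y) := by
  rw [← Real.sqrt_mul (star_trivial x ▸ dotProduct_self_star_nonneg x), ← Real.sqrt_sq_eq_abs]
  refine Real.sqrt_le_sqrt ?_
  simpa only [dotProduct, pow_two] using Finset.sum_mul_sq_le_sq_mul_sq Finset.univ x y

theorem dotProduct_self_le_card_mul_sq {m : ι → ℝ} {ε : ℝ} (hm : ∀ i, |m i| ≤ ε) :
    m ⬝ᵥ m ≤ Fintype.card ι * ε ^ 2 := by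
  calc m ⬝ᵥ m = ∑ i, |m i| ^ 2 := by simp [dotProduct, sq]
    _ ≤ ∑ _i : ι, ε ^ 2 := Finset.sum_le_sum fun i _ => pow_le_pow_left₀ (abs_nonneg _) (hm i) 2
    _ = Fintype.card ι * ε ^ 2 := by simp

end DotProduct

theorem stmt_0_general {V : Type*} [NormedAddCommGroup V] [InnerProductSpace ℝ V]
    (t : ℕ) (φ : Fin t → V) (v : V) (lam ε : ℝ)
    (hlam : 0 < lam) (hε : 0 ≤ ε) (m : Fin t → ℝ) (hm : ∀ i, |m i| ≤ ε)
    (K : Matrix (Fin t) (Fin t) ℝ)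
    (hK : K = Matrix.of fun i j => (inner ℝ (φ i) (φ j) : ℝ))
    (k : Fin t → ℝ) (hk : k = fun i => (inner ℝ (φ i) v : ℝ))
    (σsq : ℝ) (hσ : σsq = (inner ℝ v v : ℝ) - k ⬝ᵥ ((K + lam • 1)⁻¹ *ᵥ k)) :
    |k ⬝ᵥ ((K + lam • 1)⁻¹ *ᵥ m)| ≤
      ε * Real.sqrt t / Real.sqrt lam * Real.sqrt σsq := by
  obtain rfl : K = gram ℝ φ := hK
  subst hk
  set A := gram ℝ φ + lam • 1
  have hA : A.PosDef := PosDef.posSemidef_add (posSemidef_gram ℝ φ) (PosDef.one.smul hlam)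
  set w := A⁻¹ *ᵥ fun i => ⟪φ i, v⟫_ℝ
  have hAw : A *ᵥ w = fun i => ⟪φ i, v⟫_ℝ := by
    rw [mulVec_mulVec, mul_nonsing_inv _ ((isUnit_iff_isUnit_det A).mp hA.isUnit), one_mulVec]
  have hkm : (fun i => ⟪φ i, v⟫_ℝ) ⬝ᵥ (A⁻¹ *ᵥ m) = w ⬝ᵥ m := by
    rw [dotProduct_mulVec, ← mulVec_transpose, ← conjTranspose_eq_transpose_of_trivial,
      hA.inv.isHermitian.eq]
  have hw : lam * (w ⬝ᵥ w) ≤ σsq :=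
    hσ ▸ mul_dotProduct_self_le_of_gram_add_smul_one_mulVec_eq φ v lam hAw
  have hm' : √(m ⬝ᵥ m) ≤ √t * ε := by
    rw [← Real.sqrt_sq hε, ← Real.sqrt_mul t.cast_nonneg]
    simpa using Real.sqrt_le_sqrt (dotProduct_self_le_card_mul_sq hm)
  calc |(fun i => ⟪φ i, v⟫_ℝ) ⬝ᵥ (A⁻¹ *ᵥ m)| = |w ⬝ᵥ m| := by rw [hkm]
    _ ≤ √(w ⬝ᵥ w) * √(m ⬝ᵥ m) := abs_dotProduct_le_sqrt_mul_sqrt w m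
    _ ≤ √(σsq / lam) * (√t * ε) := by
        refine mul_le_mul (Real.sqrt_le_sqrt ?_) hm' (Real.sqrt_nonneg _) (Real.sqrt_nonneg _)
        rwa [le_div_iff₀ hlam, mul_comm]
    _ = ε * √t / √lam * √σsq := by
        rw [Real.sqrt_div' _ hlam.le]
        ring

/-- feature-space form of the mean-difference lemma (Lemma 3.1). -/
theorem stmt_0 {V : Type*} [NormedAddCommGroup V] [InnerProductSpace ℝ V]
    (t : ℕ) (ht : 1 ≤ t) (φ : Fin t → V) (v : V) (lam ε : ℝ)
    (hlam : 0 < lam) (hε : 0 ≤ ε) (m : Fin t → ℝ) (hm : ∀ i, |m i| ≤ ε)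
    (K : Matrix (Fin t) (Fin t) ℝ)
    (hK : K = Matrix.of fun i j => (inner ℝ (φ i) (φ j) : ℝ))
    (k : Fin t → ℝ) (hk : k = fun i => (inner ℝ (φ i) v : ℝ))
    (σsq : ℝ) (hσ : σsq = (inner ℝ v v : ℝ) - k ⬝ᵥ ((K + lam • 1)⁻¹ *ᵥ k)) :
    |k ⬝ᵥ ((K + lam • 1)⁻¹ *ᵥ m)| ≤
      ε * Real.sqrt t / Real.sqrt lam * Real.sqrt σsq :=
  stmt_0_general t φ v lam ε hlam hε m hm K hK k hk σsq hσ
end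

section
/- Let t ≥ 1, λ > 0, and let s₁, …, s_t be real numbers with 0 ≤ sᵢ ≤ 1 for all i. Then Σ_{i=1}^{t} sᵢ ≤ √( (2λ + 1) · t · (1/2) Σ_{i=1}^{t} ln(1 + sᵢ²/λ) ). -/
/-! Each `sᵢ² ∈ [0,1]` is at most `(2λ+1)/2 · ln(1 + sᵢ²/λ)`, by the bound `ln(1+y) ≥ 2y/(y+2)`;
summing and applying Cauchy–Schwarz `(Σ sᵢ)² ≤ t Σ sᵢ²` gives the claim after taking square roots. -/

open Real Finset

lemma le_mul_log_one_add_div {lam x : ℝ} (hlam : 0 < lam) (hx0 : 0 ≤ x) (hx1 : x ≤ 1) :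
    x ≤ (2 * lam + 1) / 2 * log (1 + x / lam) := by
  have hlog : 2 * x / (x + 2 * lam) ≤ log (1 + x / lam) := by
    convert le_log_one_add_of_nonneg (div_nonneg hx0 hlam.le) using 1
    field_simp
  calc x ≤ (2 * lam + 1) / 2 * (2 * x / (x + 2 * lam)) := by
        rw [mul_div_assoc', le_div_iff₀ (by positivity)]
        nlinarith
    _ ≤ (2 * lam + 1) / 2 * log (1 + x / lam) := by gcongr

theorem stmt_9_general (t : ℕ) (lam : ℝ) (hlam : 0 < lam)
    (s : Fin t → ℝ) (hs0 : ∀ i, 0 ≤ s i) (hs1 : ∀ i, s i ≤ 1) :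
    ∑ i, s i ≤
      Real.sqrt ((2 * lam + 1) * t * (1 / 2 * ∑ i, Real.log (1 + s i ^ 2 / lam))) := by
  have hsq_le : ∀ i, s i ^ 2 ≤ (2 * lam + 1) / 2 * log (1 + s i ^ 2 / lam) := fun i =>
    le_mul_log_one_add_div hlam (sq_nonneg _) (pow_le_one₀ (hs0 i) (hs1 i))
  refine le_sqrt_of_sq_le ?_
  calc (∑ i, s i) ^ 2 ≤ t * ∑ i, s i ^ 2 := by
        simpa using sq_sum_le_card_mul_sum_sq (s := univ) (f := s)
    _ ≤ t * ∑ i, (2 * lam + 1) / 2 * log (1 + s i ^ 2 / lam) := by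
        gcongr with i; exact hsq_le i
    _ = (2 * lam + 1) * t * (1 / 2 * ∑ i, log (1 + s i ^ 2 / lam)) := by
        rw [← mul_sum]; ring

/-- abstract sum-of-standard-deviations bound (Lemma A.2):
Σ sᵢ ≤ √((2λ+1)·t·(1/2)Σ ln(1 + sᵢ²/λ)) for sᵢ ∈ [0,1]. -/
theorem stmt_9 (t : ℕ) (ht : 1 ≤ t) (lam : ℝ) (hlam : 0 < lam)
    (s : Fin t → ℝ) (hs0 : ∀ i, 0 ≤ s i) (hs1 : ∀ i, s i ≤ 1) :
    ∑ i, s i ≤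
      Real.sqrt ((2 * lam + 1) * t * (1 / 2 * ∑ i, Real.log (1 + s i ^ 2 / lam))) :=
  stmt_9_general t lam hlam s hs0 hs1
end

section
/- Let D be a nonempty set, T ≥ 1 a natural number, ε ≥ 0, λ > 0, γ ≥ 0, and β₁ ≤ β₂ ≤ … ≤ β_T nonnegative reals. Let f̃ : D → ℝ, and for each t ∈ {1, …, T} let μ_{t−1}, σ_{t−1} : D → ℝ with σ_{t−1}(x) ≥ 0 for all x, and let x_t ∈ D. Assume: (i) for every t ∈ {1,…,T} and every x ∈ D, |f̃(x) − μ_{t−1}(x)| ≤ (β_t + ε√t/√λ)·σ_{t−1}(x); (ii) for every t ∈ {1,…,T} and every x ∈ D, μ_{t−1}(x_t) + (β_t + ε√t/√λ)·σ_{t−1}(x_t) ≥ μ_{t−1}(x) + (β_t + ε√t/√λ)·σ_{t−1}(x); and (iii) Σ_{t=1}^{T} σ_{t−1}(x_t) ≤ √((2λ+1)γT). Then for every x* ∈ D, Σ_{t=1}^{T} ( f̃(x*) − f̃(x_t) ) ≤ 2β_T·√((2λ+1)γT) + 2(ε/√λ)·T·√((2λ+1)γ). -/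
/-- deterministic core of the EC-GP-UCB regret bound (Theorem 3.1). -/
theorem stmt_10 {D : Type*} [Nonempty D]
    (T : ℕ) (hT : 1 ≤ T) (ε lam γ : ℝ) (hε : 0 ≤ ε) (hlam : 0 < lam) (hγ : 0 ≤ γ)
    (β : ℕ → ℝ) (hβ0 : ∀ t ∈ Finset.Icc 1 T, 0 ≤ β t)
    (hβmono : ∀ s ∈ Finset.Icc 1 T, ∀ t ∈ Finset.Icc 1 T, s ≤ t → β s ≤ β t)
    (ftil : D → ℝ) (μ σ : ℕ → D → ℝ) (hσ0 : ∀ t x, 0 ≤ σ t x)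
    (x : ℕ → D)
    (h1 : ∀ t ∈ Finset.Icc 1 T, ∀ y : D,
      |ftil y - μ (t - 1) y| ≤ (β t + ε * Real.sqrt t / Real.sqrt lam) * σ (t - 1) y)
    (h2 : ∀ t ∈ Finset.Icc 1 T, ∀ y : D,
      μ (t - 1) (x t) + (β t + ε * Real.sqrt t / Real.sqrt lam) * σ (t - 1) (x t) ≥
        μ (t - 1) y + (β t + ε * Real.sqrt t / Real.sqrt lam) * σ (t - 1) y)
    (h3 : ∑ t ∈ Finset.Icc 1 T, σ (t - 1) (x t) ≤ Real.sqrt ((2 * lam + 1) * γ * T)) :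
    ∀ xstar : D,
      ∑ t ∈ Finset.Icc 1 T, (ftil xstar - ftil (x t)) ≤
        2 * β T * Real.sqrt ((2 * lam + 1) * γ * T) +
          2 * (ε / Real.sqrt lam) * T * Real.sqrt ((2 * lam + 1) * γ) := by
  intro xstar
  set c : ℕ → ℝ := fun t => β t + ε * Real.sqrt t / Real.sqrt lam with hc
  have hsl : 0 < Real.sqrt lam := Real.sqrt_pos.mpr hlam
  have hTmem : T ∈ Finset.Icc 1 T := Finset.mem_Icc.mpr ⟨hT, le_rfl⟩
  have hcT : 0 ≤ c T := by
    have := hβ0 T hTmem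
    have : 0 ≤ ε * Real.sqrt T / Real.sqrt lam := by positivity
    have := hβ0 T hTmem
    simp only [hc]; positivity
  have hstep : ∀ t ∈ Finset.Icc 1 T,
      ftil xstar - ftil (x t) ≤ 2 * c T * σ (t - 1) (x t) := by
    intro t ht
    obtain ⟨ht1, ht2⟩ := Finset.mem_Icc.mp ht
    have ha := h1 t ht xstar
    have hb := h1 t ht (x t)
    have hub := h2 t ht xstar
    have hctT : c t ≤ c T := by
      have h1' := hβmono t ht T hTmem ht2
      have h2' : Real.sqrt t ≤ Real.sqrt T := by
        exact Real.sqrt_le_sqrt (by exact_mod_cast ht2)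
      have : ε * Real.sqrt t / Real.sqrt lam ≤ ε * Real.sqrt T / Real.sqrt lam := by
        gcongr
      simp only [hc]; linarith
    have hct0 : 0 ≤ c t := by
      have := hβ0 t ht
      have : 0 ≤ ε * Real.sqrt t / Real.sqrt lam := by positivity
      have := hβ0 t ht
      simp only [hc]; linarith
    have ha' := abs_le.mp ha
    have hb' := abs_le.mp hb
    have hσt : 0 ≤ σ (t - 1) (x t) := hσ0 _ _
    have key : ftil xstar - ftil (x t) ≤ 2 * c t * σ (t - 1) (x t) := by
      simp only [hc] at *
      nlinarith [ha'.1, ha'.2, hb'.1, hb'.2, hub, hσ0 (t-1) xstar]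
    calc ftil xstar - ftil (x t) ≤ 2 * c t * σ (t - 1) (x t) := key
      _ ≤ 2 * c T * σ (t - 1) (x t) := by nlinarith
  have hsum : ∑ t ∈ Finset.Icc 1 T, (ftil xstar - ftil (x t)) ≤
      2 * c T * Real.sqrt ((2 * lam + 1) * γ * T) := by
    calc ∑ t ∈ Finset.Icc 1 T, (ftil xstar - ftil (x t))
        ≤ ∑ t ∈ Finset.Icc 1 T, 2 * c T * σ (t - 1) (x t) := Finset.sum_le_sum hstep
      _ = 2 * c T * ∑ t ∈ Finset.Icc 1 T, σ (t - 1) (x t) := by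
          rw [Finset.mul_sum]
      _ ≤ 2 * c T * Real.sqrt ((2 * lam + 1) * γ * T) := by
          apply mul_le_mul_of_nonneg_left h3 (by positivity)
  refine hsum.trans (le_of_eq ?_)
  have hsq : Real.sqrt ((2 * lam + 1) * γ * T) =
      Real.sqrt ((2 * lam + 1) * γ) * Real.sqrt T := by
    rw [Real.sqrt_mul (by positivity)]
  have hTT : Real.sqrt (T : ℝ) * Real.sqrt (T : ℝ) = (T : ℝ) :=
    Real.mul_self_sqrt (by positivity)
  simp only [hc]
  rw [hsq]
  field_simp
  ring_nf
  rw [Real.sq_sqrt (by positivity : (0:ℝ) ≤ (T:ℝ))]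
  ring
end

section
/- Let D be a set, D′ ⊆ D, and let μ, σ, f : D → ℝ with σ(x) ≥ 0 for all x, and β, c, S ≥ 0 reals. Assume: (i) |μ(x) − f(x)| ≤ β·σ(x) + c for all x ∈ D; (ii) σ(x) ≤ S for all x ∈ D; and (iii) for every x ∈ D′ and every x″ ∈ D, μ(x) + β·σ(x) ≥ μ(x″) − β·σ(x″). Then for all x, x* ∈ D′: f(x*) − f(x) ≤ 2c + 4βS. -/
/-- retained-point regret lemma (Eqs. (47)–(51)). -/
theorem stmt_14 {D : Type*} (D' : Set D)
    (μ σ f : D → ℝ) (hσ0 : ∀ x, 0 ≤ σ x)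
    (β c S : ℝ) (hβ : 0 ≤ β) (hc : 0 ≤ c) (hS : 0 ≤ S)
    (h1 : ∀ x, |μ x - f x| ≤ β * σ x + c)
    (h2 : ∀ x, σ x ≤ S)
    (h3 : ∀ x ∈ D', ∀ x'' : D, μ x + β * σ x ≥ μ x'' - β * σ x'') :
    ∀ x ∈ D', ∀ xstar ∈ D', f xstar - f x ≤ 2 * c + 4 * β * S := by
  intro x hx xstar hxstar
  have ha := abs_le.1 (h1 x)
  have hb := abs_le.1 (h1 xstar)
  have h3' := h3 x hx xstar
  have hσx := h2 x
  have hσs := h2 xstar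
  have hx1 : β * σ x ≤ β * S := mul_le_mul_of_nonneg_left hσx hβ
  have hx2 : β * σ xstar ≤ β * S := mul_le_mul_of_nonneg_left hσs hβ
  linarith
end
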